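/- Fix k ∈ ℕ and u, v ∈ B_R with q(u) > 0. Let D_k^{(2)}(u,v,H) := ∑_{i=0}^{k} ‖H Ψ_{t_i}(v) − H Ψ_{t_i}(u)‖₂², and define the unnormalized smoothing density p_k(w) := q(w)·∏_{i=0}^{k} exp(−‖H Ψ_{t_i}(w) − Y_i‖₂²/(2ε²)). Then the probability (over the Gaussian noise) that p_k(v)/p_k(u) ≥ (q(v)/q(u))·exp(−D_k^{(2)}(u,v,H)/(2ε²)) is at least 1/2. -/

import Mathlib

/-! With `δᵢ = H Ψ_{tᵢ}(v) - H Ψ_{tᵢ}(u)` and `Yᵢ = H Ψ_{tᵢ}(u) + Zᵢ`, completing the square gives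
`‖Zᵢ‖² - ‖δᵢ - Zᵢ‖² = 2⟪δᵢ, Zᵢ⟫ - ‖δᵢ‖²`, so the likelihood-ratio bound holds whenever
`∑ᵢ ⟪δᵢ, Zᵢ⟫ ≥ 0`. The noise coordinates are independent and centred Gaussian, so the whole noise
family has the same law as its negative; hence `∑ᵢ ⟪δᵢ, Zᵢ⟫` is symmetric and is nonnegative with
probability at least `1/2`. -/

open MeasureTheory ProbabilityTheory Set
open scoped ENNReal

noncomputable section

/-- The (un-normalised) smoothing density after observations
`Y_i = H Ψ_{t_i}(u) + Z_i(ω)`, `0 ≤ i ≤ k`, for Gaussian observation noise with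
covariance `ε²` times the identity:
`p_k(w) = q(w) ∏_{i=0}^k exp(-‖H Ψ_{t_i}(w) - Y_i‖² / (2ε²))`. -/
def smootherDensity {d dO : ℕ} {Ω : Type*}
    (Ψ : ℝ → EuclideanSpace ℝ (Fin d) → EuclideanSpace ℝ (Fin d))
    (H : EuclideanSpace ℝ (Fin d) →L[ℝ] EuclideanSpace ℝ (Fin dO))
    (q : EuclideanSpace ℝ (Fin d) → ℝ) (h ε : ℝ)
    (u : EuclideanSpace ℝ (Fin d)) (Z : ℕ → Ω → EuclideanSpace ℝ (Fin dO))
    (k : ℕ) (w : EuclideanSpace ℝ (Fin d)) (ω : Ω) : ℝ :=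
  q w * ∏ i ∈ Finset.range (k + 1),
    Real.exp (-‖H (Ψ (i * h) w) - (H (Ψ (i * h) u) + Z i ω)‖ ^ 2 / (2 * ε ^ 2))

namespace ProbabilityTheory

variable {Ω : Type*} {mΩ : MeasurableSpace Ω} {μ : Measure Ω}

lemma identDistrib_neg_of_map_eq_gaussianReal [IsProbabilityMeasure μ] {X : Ω → ℝ}
    {v : NNReal} (hX : μ.map X = gaussianReal 0 v) : IdentDistrib X (-X) μ μ := by
  have hlaw : HasLaw X (gaussianReal 0 v) μ :=
    ⟨.of_map_ne_zero (by simp [hX, NeZero.ne]), hX⟩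
  simpa using hlaw.identDistrib (by simpa using gaussianReal_neg hlaw)

lemma half_le_measure_nonneg_of_identDistrib_neg [IsProbabilityMeasure μ] {S : Ω → ℝ}
    (hS : IdentDistrib S (-S) μ μ) : 1 / 2 ≤ μ {ω | 0 ≤ S ω} := by
  have hflip : μ {ω | S ω ≤ 0} = μ {ω | 0 ≤ S ω} := by
    simpa [Set.preimage, neg_nonneg] using
      (hS.measure_mem_eq (measurableSet_Ici (a := (0 : ℝ)))).symm
  have hcover : 1 ≤ μ {ω | 0 ≤ S ω} + μ {ω | S ω ≤ 0} := by
    calc (1 : ℝ≥0∞) = μ ({ω | 0 ≤ S ω} ∪ {ω | S ω ≤ 0}) := by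
          rw [← measure_univ (μ := μ)]; congr 1; ext ω; simpa using le_total 0 (S ω)
      _ ≤ _ := measure_union_le _ _
  rw [hflip, ← two_mul, mul_comm] at hcover
  exact ENNReal.div_le_of_le_mul hcover

lemma half_le_measure_sum_inner_nonneg [IsProbabilityMeasure μ] {ι : Type*} [Countable ι]
    {n : ℕ} {Z : ι → Ω → EuclideanSpace ℝ (Fin n)}
    (hindep : iIndepFun (fun p : ι × Fin n => fun ω => Z p.1 ω p.2) μ)
    (hsymm : ∀ p : ι × Fin n,
      IdentDistrib (fun ω => Z p.1 ω p.2) (fun ω => -Z p.1 ω p.2) μ μ)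
    (s : Finset ι) (a : ι → EuclideanSpace ℝ (Fin n)) :
    1 / 2 ≤ μ {ω | 0 ≤ ∑ i ∈ s, inner ℝ (a i) (Z i ω)} := by
  let F : (ι × Fin n → ℝ) → ℝ := fun x =>
    ∑ i ∈ s, inner ℝ (a i) (WithLp.toLp 2 fun j => x (i, j))
  have hF : Measurable F := by fun_prop
  have hcoords : IdentDistrib (fun ω (p : ι × Fin n) => Z p.1 ω p.2)
      (fun ω (p : ι × Fin n) => -Z p.1 ω p.2) μ μ :=
    .pi hsymm hindep (hindep.comp (fun _ x => -x) fun _ => measurable_neg)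
  apply half_le_measure_nonneg_of_identDistrib_neg
  convert hcoords.comp hF using 1 <;> ext ω
  · simp [F]
  · have hneg : ∀ i, (WithLp.toLp 2 fun j => -Z i ω j) = -Z i ω := fun _ => rfl
    simp [F, hneg]

end ProbabilityTheory

lemma exp_neg_sum_norm_sub_sq_div_le {E ι : Type*} [NormedAddCommGroup E] [InnerProductSpace ℝ E]
    (s : Finset ι) (x y z : ι → E) {c : ℝ} (hc : 0 ≤ c)
    (hxyz : 0 ≤ ∑ i ∈ s, inner ℝ (x i - y i) (z i)) :
    Real.exp (-(∑ i ∈ s, ‖x i - y i‖ ^ 2) / c) ≤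
      (∏ i ∈ s, Real.exp (-‖x i - (y i + z i)‖ ^ 2 / c)) /
        ∏ i ∈ s, Real.exp (-‖y i - (y i + z i)‖ ^ 2 / c) := by
  have hterm : ∀ i, -‖x i - (y i + z i)‖ ^ 2 / c - -‖y i - (y i + z i)‖ ^ 2 / c =
      (2 * inner ℝ (x i - y i) (z i) - ‖x i - y i‖ ^ 2) / c := by
    intro i
    rw [show x i - (y i + z i) = (x i - y i) - z i by abel,
      show y i - (y i + z i) = -z i by abel, norm_neg, norm_sub_sq_real]
    ring
  rw [← Real.exp_sum, ← Real.exp_sum, ← Real.exp_sub, ← Finset.sum_sub_distrib, Real.exp_le_exp,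
    Finset.sum_congr rfl fun i _ => hterm i, ← Finset.sum_div, Finset.sum_sub_distrib,
    ← Finset.mul_sum]
  gcongr
  linarith

lemma div_mul_exp_le_smootherDensity_div {d dO : ℕ} {Ω : Type*}
    (Ψ : ℝ → EuclideanSpace ℝ (Fin d) → EuclideanSpace ℝ (Fin d))
    (H : EuclideanSpace ℝ (Fin d) →L[ℝ] EuclideanSpace ℝ (Fin dO))
    {q : EuclideanSpace ℝ (Fin d) → ℝ} (h ε : ℝ) {u v : EuclideanSpace ℝ (Fin d)}
    (hqu : 0 ≤ q u) (hqv : 0 ≤ q v) (Z : ℕ → Ω → EuclideanSpace ℝ (Fin dO)) (k : ℕ) {ω : Ω}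
    (hω : 0 ≤ ∑ i ∈ Finset.range (k + 1), inner ℝ (H (Ψ (i * h) v) - H (Ψ (i * h) u)) (Z i ω)) :
    q v / q u * Real.exp
        (-(∑ i ∈ Finset.range (k + 1), ‖H (Ψ (i * h) v) - H (Ψ (i * h) u)‖ ^ 2) / (2 * ε ^ 2)) ≤
      smootherDensity Ψ H q h ε u Z k v ω / smootherDensity Ψ H q h ε u Z k u ω := by
  rw [smootherDensity, smootherDensity, mul_div_mul_comm]
  exact mul_le_mul_of_nonneg_left (exp_neg_sum_norm_sub_sq_div_le _ _ _ _ (by positivity) hω)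
    (div_nonneg hqv hqu)

theorem prob_likelihood_ratio_gaussian_general {d dO : ℕ}
    (Ψ : ℝ → EuclideanSpace ℝ (Fin d) → EuclideanSpace ℝ (Fin d))
    (h : ℝ)
    (H : EuclideanSpace ℝ (Fin d) →L[ℝ] EuclideanSpace ℝ (Fin dO))
    (ε : ℝ)
    (Ω : Type*) [MeasurableSpace Ω] (μ : Measure Ω) [IsProbabilityMeasure μ]
    (Z : ℕ → Ω → EuclideanSpace ℝ (Fin dO))
    (hZindep : iIndepFun
      (fun p : ℕ × Fin dO => fun ω => Z p.1 ω p.2) μ)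
    (hZlaw : ∀ i : ℕ, ∀ j : Fin dO,
      Measure.map (fun ω => Z i ω j) μ = gaussianReal 0 (Real.toNNReal ε ^ 2))
    (q : EuclideanSpace ℝ (Fin d) → ℝ) (hq : ∀ x, 0 ≤ q x)
    (u : EuclideanSpace ℝ (Fin d))
    (v : EuclideanSpace ℝ (Fin d))
    (k : ℕ) :
    (1 : ℝ≥0∞) / 2 ≤
      μ {ω | (q v / q u) * Real.exp
          (-(∑ i ∈ Finset.range (k + 1), ‖H (Ψ (i * h) v) - H (Ψ (i * h) u)‖ ^ 2) /
            (2 * ε ^ 2)) ≤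
        smootherDensity Ψ H q h ε u Z k v ω / smootherDensity Ψ H q h ε u Z k u ω} := by
  have hsymm : ∀ p : ℕ × Fin dO,
      IdentDistrib (fun ω => Z p.1 ω p.2) (fun ω => -Z p.1 ω p.2) μ μ := fun p =>
    identDistrib_neg_of_map_eq_gaussianReal (hZlaw p.1 p.2)
  calc 1 / 2 ≤ μ {ω | 0 ≤ ∑ i ∈ Finset.range (k + 1),
        inner ℝ (H (Ψ (i * h) v) - H (Ψ (i * h) u)) (Z i ω)} :=
      half_le_measure_sum_inner_nonneg hZindep hsymm _ _
    _ ≤ _ := measure_mono fun ω hω =>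
      div_mul_exp_le_smootherDensity_div Ψ H h ε (hq u) (hq v) Z k hω

/-- for Gaussian observation noise, with probability at least
`1/2` the likelihood ratio of a fixed point `v` against the true initial
condition `u` is at least `(q(v)/q(u)) exp(-D_k^{(2)}(u,v,H)/(2ε²))`. -/
theorem prob_likelihood_ratio_gaussian {d dO : ℕ}
    (A : EuclideanSpace ℝ (Fin d) →L[ℝ] EuclideanSpace ℝ (Fin d))
    (B : EuclideanSpace ℝ (Fin d) →L[ℝ] EuclideanSpace ℝ (Fin d) →L[ℝ] EuclideanSpace ℝ (Fin d))
    (f : EuclideanSpace ℝ (Fin d))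
    (R δ : ℝ) (hR : 0 < R) (hδ : 0 < δ)
    (htrap : ∀ x : EuclideanSpace ℝ (Fin d),
      ‖x‖ ∈ Icc R (R + δ) → inner ℝ (f - A x - B x x) x ≤ 0)
    (Ψ : ℝ → EuclideanSpace ℝ (Fin d) → EuclideanSpace ℝ (Fin d))
    (hΨ0 : ∀ x, ‖x‖ ≤ R → Ψ 0 x = x)
    (hΨR : ∀ x, ‖x‖ ≤ R → ∀ t : ℝ, 0 ≤ t → ‖Ψ t x‖ ≤ R)
    (hΨode : ∀ x, ‖x‖ ≤ R → ∀ t : ℝ, 0 ≤ t →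
      HasDerivWithinAt (fun s => Ψ s x)
        (f - A (Ψ t x) - B (Ψ t x) (Ψ t x)) (Ici 0) t)
    (h : ℝ) (hh : 0 < h)
    (H : EuclideanSpace ℝ (Fin d) →L[ℝ] EuclideanSpace ℝ (Fin dO))
    (ε : ℝ) (hε : 0 < ε)
    (Ω : Type*) [MeasurableSpace Ω] (μ : Measure Ω) [IsProbabilityMeasure μ]
    (Z : ℕ → Ω → EuclideanSpace ℝ (Fin dO))
    (hZmeas : ∀ i, Measurable (Z i))
    (hZindep : iIndepFun
      (fun p : ℕ × Fin dO => fun ω => Z p.1 ω p.2) μ)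
    (hZlaw : ∀ i : ℕ, ∀ j : Fin dO,
      Measure.map (fun ω => Z i ω j) μ = gaussianReal 0 (Real.toNNReal ε ^ 2))
    (q : EuclideanSpace ℝ (Fin d) → ℝ) (hq : ∀ x, 0 ≤ q x)
    (hqsupp : ∀ x : EuclideanSpace ℝ (Fin d), ¬ ‖x‖ ≤ R → q x = 0)
    (u : EuclideanSpace ℝ (Fin d)) (hu : ‖u‖ ≤ R) (hqu : 0 < q u)
    (v : EuclideanSpace ℝ (Fin d)) (hv : ‖v‖ ≤ R)
    (k : ℕ) :
    (1 : ℝ≥0∞) / 2 ≤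
      μ {ω | (q v / q u) * Real.exp
          (-(∑ i ∈ Finset.range (k + 1), ‖H (Ψ (i * h) v) - H (Ψ (i * h) u)‖ ^ 2) /
            (2 * ε ^ 2)) ≤
        smootherDensity Ψ H q h ε u Z k v ω / smootherDensity Ψ H q h ε u Z k u ω} :=
  prob_likelihood_ratio_gaussian_general Ψ h H ε Ω μ Z hZindep hZlaw q hq u v k
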